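/- Let n be a positive integer with gcd(n,10) = 1. Then for every prime p, n is primitively represented by x²+y²+10z² over ℤ_p: there exist x, y, z ∈ ℤ_p with x²+y²+10z² = n such that not all of x, y, z lie in pℤ_p. -/

import Mathlib

/-!
For odd `p`, choose `c` with `n - 10c² ≢ 0 (mod p)` (`c = 1` works when `p ∣ n`, since `p ∤ 10`)
and write `n - 10c² ≡ a² + b² (mod p)` with `a ≢ 0`; Hensel's lemma lifts `a` to a unit square
root of `n - b² - 10c²`. For `p = 2`, an odd `n` is `≡ 1 + y² + 10z² (mod 8)` with `y ∈ {0, 2}`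
and `z ∈ {0, 1}`, and Hensel's lemma for `X² - t` needs only `t ≡ 1 (mod 8)`.
-/

open Polynomial

namespace PadicInt

variable {p : ℕ} [Fact p.Prime]

theorem exists_sq_eq_of_norm_sub_sq_lt {t a : ℤ_[p]} (ha : ‖a‖ = 1)
    (h : ‖t - a ^ 2‖ < ‖(2 : ℤ_[p])‖ ^ 2) : ∃ x : ℤ_[p], x ^ 2 = t ∧ ‖x - a‖ < ‖(2 : ℤ_[p])‖ := by
  have hderiv : aeval a (derivative (X ^ 2 - C t)) = 2 * a := by norm_num
  have hderiv_norm : ‖aeval a (derivative (X ^ 2 - C t))‖ = ‖(2 : ℤ_[p])‖ := by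
    rw [hderiv, norm_mul, ha, mul_one]
  have hval : ‖aeval a (X ^ 2 - C t)‖ < ‖aeval a (derivative (X ^ 2 - C t))‖ ^ 2 := by
    rw [hderiv_norm]
    simpa [norm_sub_rev] using h
  obtain ⟨x, hx, hxa, -⟩ := hensels_lemma hval
  exact ⟨x, by simpa [sub_eq_zero] using hx, hderiv_norm ▸ hxa⟩

theorem norm_lt_one_iff_toZMod_eq_zero (x : ℤ_[p]) : ‖x‖ < 1 ↔ toZMod x = 0 := by
  rw [← RingHom.mem_ker, ker_toZMod, IsLocalRing.mem_maximalIdeal, mem_nonunits]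

theorem norm_eq_one_iff_toZMod_ne_zero (x : ℤ_[p]) : ‖x‖ = 1 ↔ toZMod x ≠ 0 := by
  rw [Ne, ← norm_lt_one_iff_toZMod_eq_zero, not_lt]
  exact ⟨ge_of_eq, (norm_le_one x).antisymm⟩

end PadicInt

open PadicInt

def PrimitivelyRepresents (p : ℕ) [Fact p.Prime] (k n : ℤ_[p]) : Prop :=
  ∃ x y z : ℤ_[p], x ^ 2 + y ^ 2 + k * z ^ 2 = n ∧
    ¬((p : ℤ_[p]) ∣ x ∧ (p : ℤ_[p]) ∣ y ∧ (p : ℤ_[p]) ∣ z)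

variable {p : ℕ} [Fact p.Prime]

theorem primitivelyRepresents_of_norm_sub_lt {k n a y z : ℤ_[p]} (ha : ‖a‖ = 1)
    (h : ‖n - y ^ 2 - k * z ^ 2 - a ^ 2‖ < ‖(2 : ℤ_[p])‖ ^ 2) : PrimitivelyRepresents p k n := by
  obtain ⟨x, hx, hxa⟩ := exists_sq_eq_of_norm_sub_sq_lt ha h
  have hpa : ¬(p : ℤ_[p]) ∣ a := by rw [← norm_lt_one_iff_dvd, ha]; exact lt_irrefl 1
  have hpxa : (p : ℤ_[p]) ∣ x - a := (norm_lt_one_iff_dvd _).mp (hxa.trans_le (norm_le_one 2))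
  refine ⟨x, y, z, by rw [hx]; ring, fun ⟨hpx, _⟩ => hpa ?_⟩
  simpa using dvd_sub hpx hpxa

theorem ZMod.exists_sq_add_sq_add_mul_sq {k m : ZMod p} (h : m ≠ 0 ∨ k ≠ 0) :
    ∃ a b c : ZMod p, a ≠ 0 ∧ a ^ 2 + b ^ 2 + k * c ^ 2 = m := by
  obtain ⟨c, hc⟩ : ∃ c : ZMod p, m - k * c ^ 2 ≠ 0 := by
    by_cases hm : m = 0
    · exact ⟨1, by simpa [hm] using h.resolve_left (not_not.mpr hm)⟩
    · exact ⟨0, by simpa using hm⟩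
  obtain ⟨a, b, hab⟩ := ZMod.sq_add_sq p (m - k * c ^ 2)
  by_cases ha : a = 0
  · have hb : b ≠ 0 := by rintro rfl; exact hc (by simpa [ha] using hab.symm)
    exact ⟨b, a, c, hb, by linear_combination hab⟩
  · exact ⟨a, b, c, ha, by linear_combination hab⟩

theorem primitivelyRepresents_of_ne_two (hp : p ≠ 2) {k n : ℤ_[p]}
    (h : toZMod n ≠ 0 ∨ toZMod k ≠ 0) : PrimitivelyRepresents p k n := by
  obtain ⟨a, b, c, ha, habc⟩ := ZMod.exists_sq_add_sq_add_mul_sq h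
  have h2 : ‖(2 : ℤ_[p])‖ = 1 := by
    simpa using norm_natCast_eq_one_iff.mpr ((Nat.coprime_primes Fact.out Nat.prime_two).mpr hp)
  refine primitivelyRepresents_of_norm_sub_lt (a := a.val) (y := b.val) (z := c.val)
    ((norm_eq_one_iff_toZMod_ne_zero _).mpr (by simpa using ha)) ?_
  rw [h2, one_pow, norm_lt_one_iff_toZMod_eq_zero]
  simp only [map_sub, map_mul, map_pow, map_natCast, ZMod.natCast_zmod_val]
  linear_combination -habc

theorem primitivelyRepresents_ten_of_odd {n : ℕ} (hn : Odd n) :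
    PrimitivelyRepresents 2 10 n := by
  obtain ⟨y, z, h8⟩ : ∃ y z : ℕ, (8 : ℤ) ∣ n - y ^ 2 - 10 * z ^ 2 - 1 := by
    have := Nat.odd_iff.mp hn
    obtain h | h | h | h : n % 8 = 1 ∨ n % 8 = 3 ∨ n % 8 = 5 ∨ n % 8 = 7 := by omega
    · exact ⟨0, 0, by norm_num; omega⟩
    · exact ⟨0, 1, by norm_num; omega⟩
    · exact ⟨2, 0, by norm_num; omega⟩
    · exact ⟨2, 1, by norm_num; omega⟩
  obtain ⟨m, hm⟩ := h8
  have hcast : (n : ℤ_[2]) - (y : ℤ_[2]) ^ 2 - 10 * (z : ℤ_[2]) ^ 2 - 1 ^ 2 = 2 ^ 3 * m := by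
    rw [one_pow]; exact_mod_cast hm
  have h2 : ‖(2 : ℤ_[2])‖ = 2⁻¹ := by simpa using norm_p (p := 2)
  refine primitivelyRepresents_of_norm_sub_lt (a := 1) (y := y) (z := z) norm_one ?_
  rw [hcast, norm_mul, norm_pow]
  calc ‖(2 : ℤ_[2])‖ ^ 3 * ‖(m : ℤ_[2])‖ ≤ ‖(2 : ℤ_[2])‖ ^ 3 :=
        mul_le_of_le_one_right (by positivity) (norm_le_one _)
    _ < ‖(2 : ℤ_[2])‖ ^ 2 := by rw [h2]; norm_num

theorem stmt_15_general (n : ℕ) (hcop : Nat.gcd n 10 = 1) (p : ℕ) [Fact p.Prime] :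
    ∃ x y z : ℤ_[p], x ^ 2 + y ^ 2 + 10 * z ^ 2 = (n : ℤ_[p]) ∧
      ¬((p : ℤ_[p]) ∣ x ∧ (p : ℤ_[p]) ∣ y ∧ (p : ℤ_[p]) ∣ z) := by
  rcases eq_or_ne p 2 with rfl | hp
  · exact primitivelyRepresents_ten_of_odd
      (Nat.coprime_two_right.mp (Nat.Coprime.coprime_dvd_right (by norm_num) hcop))
  · refine primitivelyRepresents_of_ne_two hp ?_
    rw [map_natCast, map_ofNat, ← not_and_or, ← Nat.cast_ofNat, ZMod.natCast_eq_zero_iff,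
      ZMod.natCast_eq_zero_iff]
    exact fun ⟨hpn, hp10⟩ => (Fact.out : p.Prime).not_dvd_one (hcop ▸ Nat.dvd_gcd hpn hp10)

/-- Every positive integer coprime with `10` is primitively represented by `x²+y²+10z²`
over `ℤ_p` for every prime `p`. -/
theorem stmt_15 (n : ℕ) (hn : 0 < n) (hcop : Nat.gcd n 10 = 1) (p : ℕ) [Fact p.Prime] :
    ∃ x y z : ℤ_[p], x ^ 2 + y ^ 2 + 10 * z ^ 2 = (n : ℤ_[p]) ∧
      ¬((p : ℤ_[p]) ∣ x ∧ (p : ℤ_[p]) ∣ y ∧ (p : ℤ_[p]) ∣ z) :=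
  stmt_15_general n hcop p
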